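/- arXiv:2305.18754 — 3 statements merged into one kernel-verified Lean document; each statement's English description precedes it below -/
import Mathlib

section
/- Let A be a simple unital C*-algebra, let G be a finite group, and let α : G → Aut(A) be an action of G on A. Suppose that for every finite subset F ⊂ A, every ε > 0, and every nonzero positive x ∈ A, there exist nonzero pairwise orthogonal projections e_g ∈ A (g ∈ G) such that, with e = Σ_{g∈G} e_g: (1) ‖e_g a − a e_g‖ < ε for all g ∈ G and all a ∈ F; (2) ‖α_g(e_h) − e_{gh}‖ < ε for all g, h ∈ G; (3) 1 − e ≾ x. Then α has the tracial Rokhlin property. -/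
open Filter Topology

/-- Cuntz subequivalence: `a ≾ b` iff there is a sequence `vₙ` with `‖a - vₙ b vₙ*‖ → 0`. -/
def CuntzSubeq {A : Type*} [NonUnitalRing A] [StarRing A] [Norm A] (a b : A) : Prop :=
  ∃ v : ℕ → A, Filter.Tendsto (fun n => ‖a - v n * b * star (v n)‖) Filter.atTop (nhds (0 : ℝ))

/-- A projection in a C*-algebra: a self-adjoint idempotent. -/
def IsProjection {A : Type*} [Mul A] [Star A] (p : A) : Prop :=
  star p = p ∧ p * p = p

/-- The tracial Rokhlin property for an action `α` of a finite group `G` on a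
unital C*-algebra `A` (where each `α g` is moreover assumed to be a *-automorphism). -/
def HasTracialRokhlin {A G : Type*} [CStarAlgebra A] [PartialOrder A] [StarOrderedRing A]
    [Group G] [Fintype G] (α : G →* (A ≃ₐ[ℂ] A)) : Prop :=
  ∀ (F : Finset A) (ε : ℝ), 0 < ε → ∀ x : A, 0 ≤ x → ‖x‖ = 1 →
    ∃ f : G → A,
      (∀ g, IsProjection (f g)) ∧
      (∀ g h, g ≠ h → f g * f h = 0) ∧
      (∀ g, ∀ a ∈ F, ‖f g * a - a * f g‖ < ε) ∧
      (∀ g h, ‖α g (f h) - f (g * h)‖ < ε) ∧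
      CuntzSubeq ((1 : A) - ∑ g, f g) x ∧
      1 - ε < ‖(∑ g, f g) * x * (∑ g, f g)‖

/-!
If `x ≥ 0` has norm one, let `y = (x - s)₊` for a level `s < 1`. By simplicity, `1` is
approximated by sums `∑ aᵢ y bᵢ`; a nonzero projection `E` almost commuting with the `bᵢ` then
satisfies `E ≈ ∑ aᵢ (y E) bᵢ`, so `‖y E‖` is bounded below by some `κ > 0` independent of `E`.
Since `sⁿ y² ≤ xⁿ`, this gives `‖E xⁿ E‖ ≥ sⁿ κ²`, and if `E` also almost commutes with `x`,
then `‖E x E‖ⁿ = ‖(E x E)ⁿ‖ ≈ ‖E xⁿ E‖`. Taking `n` large forces `‖E x E‖` close to `1`.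
The hypothesis, applied with a large enough finite set and a small enough tolerance, provides
such an `E = ∑ e_g`.
-/

namespace TwoSidedIdeal

variable {R : Type*} [Ring R]

def topologicalClosure [TopologicalSpace R] [IsTopologicalRing R] (I : TwoSidedIdeal R) :
    TwoSidedIdeal R :=
  .mk' (closure I) (subset_closure I.zero_mem)
    (fun hx hy => map_mem_closure₂ continuous_add hx hy fun _ ha _ hb => I.add_mem ha hb)
    (fun hx => map_mem_closure continuous_neg hx fun _ ha => I.neg_mem ha)
    (fun {x _} hy =>
      map_mem_closure (continuous_const_mul x) hy fun _ hb => I.mul_mem_left x _ hb)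
    (fun {_ y} hx =>
      map_mem_closure (f := (· * y)) (continuous_mul_const y) hx fun _ ha => I.mul_mem_right _ y ha)

@[simp]
lemma coe_topologicalClosure [TopologicalSpace R] [IsTopologicalRing R] (I : TwoSidedIdeal R) :
    (I.topologicalClosure : Set R) = closure I := by
  ext; simp [topologicalClosure]

lemma exists_eq_sum_mul_mul_of_mem_span_singleton {y z : R} (hz : z ∈ span {y}) :
    ∃ (n : ℕ) (a b : Fin n → R), z = ∑ i, a i * y * b i := by
  induction hz using span_induction with
  | mem x hx => exact ⟨1, 1, 1, by simp [Set.mem_singleton_iff.mp hx]⟩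
  | zero => exact ⟨0, 0, 0, by simp⟩
  | add x z _ _ hx hz =>
    obtain ⟨n, a, b, rfl⟩ := hx
    obtain ⟨m, c, d, rfl⟩ := hz
    exact ⟨n + m, Fin.append a c, Fin.append b d, by simp [Fin.sum_univ_add]⟩
  | neg x _ hx =>
    obtain ⟨n, a, b, rfl⟩ := hx
    exact ⟨n, -a, b, by simp⟩
  | left_absorb c x _ hx =>
    obtain ⟨n, a, b, rfl⟩ := hx
    exact ⟨n, fun i => c * a i, b, by simp [Finset.mul_sum, mul_assoc]⟩
  | right_absorb c x _ hx =>
    obtain ⟨n, a, b, rfl⟩ := hx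
    exact ⟨n, a, fun i => b i * c, by simp [Finset.sum_mul, mul_assoc]⟩

end TwoSidedIdeal

section NormedRing

variable {R : Type*} [NormedRing R]

lemma norm_le_of_sum_mul_mul {ι : Type*} [Fintype ι] (a b : ι → R) (y E : R) :
    ‖E‖ ≤ ‖1 - ∑ i, a i * y * b i‖ * ‖E‖ + ‖y‖ * ∑ i, ‖a i‖ * ‖E * b i - b i * E‖
      + ‖y * E‖ * ∑ i, ‖a i‖ * ‖b i‖ := by
  have hE : E = (1 - ∑ i, a i * y * b i) * E - ∑ i, a i * y * (E * b i - b i * E)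
      + ∑ i, a i * (y * E) * b i := by
    simp only [Finset.sum_mul, mul_sub, Finset.sum_sub_distrib, sub_mul, one_mul, mul_assoc]
    abel
  have h₁ : ‖∑ i, a i * y * (E * b i - b i * E)‖ ≤ ‖y‖ * ∑ i, ‖a i‖ * ‖E * b i - b i * E‖ := by
    rw [Finset.mul_sum]
    refine (norm_sum_le _ _).trans (Finset.sum_le_sum fun i _ => ?_)
    calc ‖a i * y * (E * b i - b i * E)‖ ≤ ‖a i‖ * ‖y‖ * ‖E * b i - b i * E‖ := norm_mul₃_le
      _ = _ := by ring
  have h₂ : ‖∑ i, a i * (y * E) * b i‖ ≤ ‖y * E‖ * ∑ i, ‖a i‖ * ‖b i‖ := by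
    rw [Finset.mul_sum]
    refine (norm_sum_le _ _).trans (Finset.sum_le_sum fun i _ => ?_)
    calc ‖a i * (y * E) * b i‖ ≤ ‖a i‖ * ‖y * E‖ * ‖b i‖ := norm_mul₃_le
      _ = _ := by ring
  calc ‖E‖ = ‖(1 - ∑ i, a i * y * b i) * E - ∑ i, a i * y * (E * b i - b i * E)
      + ∑ i, a i * (y * E) * b i‖ := congrArg norm hE
    _ ≤ ‖(1 - ∑ i, a i * y * b i) * E‖ + ‖∑ i, a i * y * (E * b i - b i * E)‖
      + ‖∑ i, a i * (y * E) * b i‖ :=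
        (norm_add_le _ _).trans (add_le_add_left (norm_sub_le _ _) _)
    _ ≤ _ := add_le_add (add_le_add (norm_mul_le _ _) h₁) h₂

lemma norm_conj_pow_succ_sub_le {e x : R} (he : ‖e‖ ≤ 1) (hx : ‖x‖ ≤ 1) (hee : e * e = e)
    (n : ℕ) : ‖(e * x * e) ^ (n + 1) - e * x ^ (n + 1) * e‖ ≤ n * ‖e * x - x * e‖ := by
  induction n with
  | zero => simp
  | succ n ih =>
    have hc : ‖e * x * e‖ ≤ 1 := norm_mul₃_le.trans (by
      nlinarith [norm_nonneg e, norm_nonneg x, mul_le_one₀ he (norm_nonneg x) hx])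
    have hxn : ‖x ^ (n + 1)‖ ≤ 1 :=
      (norm_pow_le' x n.succ_pos).trans (pow_le_one₀ (norm_nonneg x) hx)
    have hcross : e * x ^ (n + 1) * e * (e * x * e) - e * x ^ (n + 2) * e
        = e * x ^ (n + 1) * ((e * x - x * e) * e) :=
      calc _ = e * x ^ (n + 1) * (e * e) * x * e - e * x ^ (n + 1) * x * e := by noncomm_ring
        _ = e * x ^ (n + 1) * e * x * e - e * x ^ (n + 1) * x * (e * e) := by rw [hee]
        _ = _ := by noncomm_ring
    have key : (e * x * e) ^ (n + 2) - e * x ^ (n + 2) * e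
        = ((e * x * e) ^ (n + 1) - e * x ^ (n + 1) * e) * (e * x * e)
          + (e * x ^ (n + 1) * e * (e * x * e) - e * x ^ (n + 2) * e) := by
      noncomm_ring
    rw [key, hcross]
    calc _ ≤ ‖(e * x * e) ^ (n + 1) - e * x ^ (n + 1) * e‖ * ‖e * x * e‖
          + ‖e * x ^ (n + 1)‖ * (‖e * x - x * e‖ * ‖e‖) :=
          (norm_add_le _ _).trans (add_le_add (norm_mul_le _ _)
            ((norm_mul_le _ _).trans (by gcongr; exact norm_mul_le _ _)))
      _ ≤ n * ‖e * x - x * e‖ * 1 + 1 * (‖e * x - x * e‖ * 1) := by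
          gcongr
          exact (norm_mul_le _ _).trans (mul_le_one₀ he (norm_nonneg _) hxn)
      _ = (n + 1 : ℕ) * ‖e * x - x * e‖ := by push_cast; ring

lemma exists_norm_one_sub_sum_mul_mul_lt
    (hR : ∀ I : TwoSidedIdeal R, IsClosed (I : Set R) → I = ⊥ ∨ I = ⊤)
    {y : R} (hy : y ≠ 0) {r : ℝ} (hr : 0 < r) :
    ∃ (n : ℕ) (a b : Fin n → R), ‖1 - ∑ i, a i * y * b i‖ < r := by
  set J := (TwoSidedIdeal.span {y}).topologicalClosure
  have hyJ : y ∈ J := by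
    rw [← SetLike.mem_coe, TwoSidedIdeal.coe_topologicalClosure]
    exact subset_closure (TwoSidedIdeal.subset_span rfl)
  have hJ : J = ⊤ := (hR J (by simp [J, isClosed_closure])).resolve_left fun h =>
    hy (by simpa [h] using hyJ)
  have h1 : (1 : R) ∈ J := by rw [hJ]; exact TwoSidedIdeal.mem_top R
  rw [← SetLike.mem_coe, TwoSidedIdeal.coe_topologicalClosure] at h1
  obtain ⟨z, hz, hdist⟩ := Metric.mem_closure_iff.mp h1 r hr
  obtain ⟨n, a, b, rfl⟩ := TwoSidedIdeal.exists_eq_sum_mul_mul_of_mem_span_singleton hz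
  exact ⟨n, a, b, by rwa [dist_eq_norm] at hdist⟩

lemma exists_forall_le_norm_mul
    (hR : ∀ I : TwoSidedIdeal R, IsClosed (I : Set R) → I = ⊥ ∨ I = ⊤) {y : R} (hy : y ≠ 0) :
    ∃ (F₀ : Finset R) (δ κ : ℝ), 0 < δ ∧ 0 < κ ∧ ∀ E : R, ‖E‖ = 1 →
      (∀ b ∈ F₀, ‖E * b - b * E‖ ≤ δ) → κ ≤ ‖y * E‖ := by
  classical
  obtain ⟨n, a, b, hab⟩ :=
    exists_norm_one_sub_sum_mul_mul_lt hR hy (by norm_num : (0 : ℝ) < 1 / 2)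
  set S := ‖y‖ * ∑ i, ‖a i‖
  set C := ∑ i, ‖a i‖ * ‖b i‖
  refine ⟨Finset.univ.image b, 1 / (4 * (S + 1)), 1 / (4 * (C + 1)), by positivity,
    by positivity, fun E hE hcomm => ?_⟩
  have hcomm_sum : ‖y‖ * ∑ i, ‖a i‖ * ‖E * b i - b i * E‖ ≤ 1 / 4 :=
    calc _ ≤ ‖y‖ * ∑ i, ‖a i‖ * (1 / (4 * (S + 1))) := by
          gcongr with i
          exact hcomm _ (Finset.mem_image_of_mem b (Finset.mem_univ i))
      _ = S / (4 * (S + 1)) := by simp only [S, ← Finset.sum_mul]; ring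
      _ ≤ 1 / 4 := by rw [div_le_iff₀ (by positivity)]; linarith
  have h := norm_le_of_sum_mul_mul a b y E
  rw [hE, mul_one] at h
  rw [div_le_iff₀ (by positivity)]
  nlinarith [norm_nonneg (y * E)]

end NormedRing

lemma IsStarProjection.norm_eq_one {R : Type*} [NonUnitalNormedRing R] [StarRing R]
    [CStarRing R] {e : R} (he : IsStarProjection e) (he0 : e ≠ 0) : ‖e‖ = 1 := by
  have h : ‖e‖ * ‖e‖ = ‖e‖ := by
    rw [← CStarRing.norm_star_mul_self, he.isSelfAdjoint.star_eq, he.isIdempotentElem.eq]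
  exact (mul_eq_right₀ (norm_ne_zero_iff.mpr he0)).mp h

section Orthogonal

variable {R ι : Type*} [NonUnitalSemiring R] [Fintype ι] {p : ι → R}

lemma sum_mul_eq_of_orthogonal (hp : ∀ i, IsIdempotentElem (p i))
    (horth : ∀ i j, i ≠ j → p i * p j = 0) (j : ι) : (∑ i, p i) * p j = p j := by
  classical
  rw [Finset.sum_mul, Finset.sum_eq_single j (fun i _ hij => horth i j hij) (by simp)]
  exact (hp j).eq

lemma isStarProjection_sum [StarRing R] (hp : ∀ i, IsStarProjection (p i))
    (horth : ∀ i j, i ≠ j → p i * p j = 0) : IsStarProjection (∑ i, p i) where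
  isSelfAdjoint := isSelfAdjoint_sum _ fun i _ => (hp i).isSelfAdjoint
  isIdempotentElem := by
    rw [IsIdempotentElem, Finset.mul_sum]
    exact Finset.sum_congr rfl fun j _ =>
      sum_mul_eq_of_orthogonal (fun i => (hp i).isIdempotentElem) horth j

end Orthogonal

section CStarAlgebra

variable {A : Type*} [CStarAlgebra A] [PartialOrder A] [StarOrderedRing A]

lemma norm_pow_of_nonneg {c : A} (hc : 0 ≤ c) {n : ℕ} (hn : n ≠ 0) : ‖c ^ n‖ = ‖c‖ ^ n := by
  rw [← CFC.rpow_natCast c n, CFC.norm_rpow c (by positivity), Real.rpow_natCast]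

lemma cfc_max_sub_ne_zero [Nontrivial A] {x : A} (hx : 0 ≤ x) {s : ℝ} (hs : s < ‖x‖) :
    cfc (fun t : ℝ => max (t - s) 0) x ≠ 0 := by
  intro h
  rw [← cfc_zero ℝ x] at h
  have hspec := (eqOn_of_cfc_eq_cfc h) (CStarAlgebra.norm_mem_spectrum_of_nonneg hx)
  simp only [Pi.zero_apply, max_eq_right_iff, tsub_le_iff_right, zero_add] at hspec
  linarith

lemma pow_smul_cfc_max_sub_mul_self_le [Nontrivial A] {x : A} (hx : 0 ≤ x) (hx1 : ‖x‖ ≤ 1)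
    {s : ℝ} (hs : 0 ≤ s) (k : ℕ) :
    s ^ k • (cfc (fun t : ℝ => max (t - s) 0) x * cfc (fun t : ℝ => max (t - s) 0) x)
      ≤ x ^ k := by
  rw [← cfc_mul .., ← cfc_smul .., ← cfc_pow_id (R := ℝ) x k]
  refine cfc_mono fun t ht => ?_
  have ht0 : 0 ≤ t := (StarOrderedRing.nonneg_iff_spectrum_nonneg x).mp hx t ht
  have ht1 : t ≤ 1 := (Real.le_norm_self t).trans ((spectrum.norm_le_norm_of_mem ht).trans hx1)
  simp only [smul_eq_mul]
  rcases le_or_gt t s with hts | hts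
  · simp [max_eq_right (sub_nonpos.mpr hts), pow_nonneg ht0]
  · rw [max_eq_left (sub_nonneg.mpr hts.le)]
    calc s ^ k * ((t - s) * (t - s)) ≤ t ^ k * 1 := by
          gcongr
          exact mul_le_one₀ (by linarith) (by linarith) (by linarith)
      _ = t ^ k := mul_one _

lemma mul_norm_mul_sq_le_norm_conj {y b E : A} (hy : IsSelfAdjoint y) (hE : IsSelfAdjoint E)
    {c : ℝ} (hc : 0 ≤ c) (h : c • (y * y) ≤ b) : c * ‖y * E‖ ^ 2 ≤ ‖E * b * E‖ := by
  have hconj : c • (E * (y * y) * E) ≤ E * b * E := by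
    simpa [hE.star_eq, mul_smul_comm, smul_mul_assoc] using star_left_conjugate_le_conjugate h E
  have hnonneg : 0 ≤ c • (E * (y * y) * E) := by
    refine smul_nonneg hc ?_
    simpa [hE.star_eq] using star_left_conjugate_nonneg hy.mul_self_nonneg E
  have hnorm : ‖E * (y * y) * E‖ = ‖y * E‖ ^ 2 := by
    rw [sq, ← CStarRing.norm_star_mul_self, star_mul, hy.star_eq, hE.star_eq]
    noncomm_ring
  calc c * ‖y * E‖ ^ 2 = ‖c • (E * (y * y) * E)‖ := by
        rw [norm_smul, Real.norm_of_nonneg hc, hnorm]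
    _ ≤ ‖E * b * E‖ := CStarAlgebra.norm_le_norm_of_nonneg_of_le hnonneg hconj

lemma pow_mul_norm_mul_sq_sub_le_norm_conj_pow [Nontrivial A] {E x : A}
    (hE : IsStarProjection E) (hx : 0 ≤ x) (hx1 : ‖x‖ ≤ 1) {s : ℝ} (hs : 0 ≤ s) (n : ℕ) :
    s ^ (n + 1) * ‖cfc (fun t : ℝ => max (t - s) 0) x * E‖ ^ 2 - n * ‖E * x - x * E‖
      ≤ ‖E * x * E‖ ^ (n + 1) := by
  have hc : 0 ≤ E * x * E := by
    simpa [hE.isSelfAdjoint.star_eq] using star_left_conjugate_nonneg hx E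
  have hpow := norm_conj_pow_succ_sub_le (hE.norm_le E) hx1 hE.isIdempotentElem.eq n
  have hpeak := mul_norm_mul_sq_le_norm_conj (cfc_predicate _ x) hE.isSelfAdjoint
    (pow_nonneg hs (n + 1)) (pow_smul_cfc_max_sub_mul_self_le hx hx1 hs (n + 1))
  rw [← norm_pow_of_nonneg hc n.add_one_ne_zero]
  linarith [norm_sub_norm_le (E * x ^ (n + 1) * E) ((E * x * E) ^ (n + 1)),
    norm_sub_rev (E * x ^ (n + 1) * E) ((E * x * E) ^ (n + 1))]

lemma exists_forall_one_sub_lt_norm_conj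
    (hA : ∀ I : TwoSidedIdeal A, IsClosed (I : Set A) → I = ⊥ ∨ I = ⊤)
    {x : A} (hx : 0 ≤ x) (hx1 : ‖x‖ = 1) {ε : ℝ} (hε : 0 < ε) :
    ∃ (F₀ : Finset A) (δ : ℝ), 0 < δ ∧ ∀ E : A, IsStarProjection E → E ≠ 0 →
      (∀ b ∈ F₀, ‖E * b - b * E‖ ≤ δ) → 1 - ε < ‖E * x * E‖ := by
  classical
  have : Nontrivial A := nontrivial_of_ne x 0 (by rintro rfl; simp at hx1)
  set ε' := min ε 1
  have hε' : 0 < ε' := lt_min hε one_pos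
  have hε'1 : ε' ≤ 1 := min_le_right ε 1
  have hε'ε : ε' ≤ ε := min_le_left ε 1
  set r := 1 - ε' / 2 with hr_def
  set s := 1 - ε' / 4 with hs_def
  have hr : 0 < r := by linarith
  have hrs : r < s := by linarith
  have hs : 0 < s := hr.trans hrs
  obtain ⟨F₁, δ₁, κ, hδ₁, hκ, hF₁⟩ :=
    exists_forall_le_norm_mul hA (cfc_max_sub_ne_zero hx (s := s) (by linarith))
  obtain ⟨n, hn⟩ := exists_pow_lt_of_lt_one (half_pos (pow_pos hκ 2))
    ((div_lt_one hs).mpr hrs)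
  have hκpow : 2 * r ^ (n + 1) ≤ s ^ (n + 1) * κ ^ 2 := by
    have h := (pow_le_pow_of_le_one (div_pos hr hs).le
      ((div_lt_one hs).mpr hrs).le (Nat.le_add_right n 1)).trans hn.le
    rw [div_pow, div_le_iff₀ (pow_pos hs _)] at h
    linarith
  refine ⟨insert x F₁, min δ₁ (r ^ (n + 1) / (n + 1)), by positivity,
    fun E hE hE0 hcomm => ?_⟩
  have hyE := hF₁ E (hE.norm_eq_one hE0) fun b hb =>
    (hcomm b (Finset.mem_insert_of_mem hb)).trans (min_le_left _ _)
  have hxE : n * ‖E * x - x * E‖ ≤ r ^ (n + 1) :=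
    calc _ ≤ (n + 1) * (r ^ (n + 1) / (n + 1)) := by
          gcongr
          · linarith
          · exact (hcomm x (Finset.mem_insert_self x F₁)).trans (min_le_right _ _)
      _ = r ^ (n + 1) := by field_simp
  have hchain := pow_mul_norm_mul_sq_sub_le_norm_conj_pow hE hx hx1.le hs.le n
  have hκE : s ^ (n + 1) * κ ^ 2
      ≤ s ^ (n + 1) * ‖cfc (fun t : ℝ => max (t - s) 0) x * E‖ ^ 2 := by
    gcongr
  have hr_le : r ≤ ‖E * x * E‖ :=
    le_of_pow_le_pow_left₀ n.add_one_ne_zero (norm_nonneg _) (by linarith)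
  linarith

end CStarAlgebra

theorem tracialRokhlin_of_nonzero_projections_general
    {A G : Type*} [CStarAlgebra A] [PartialOrder A] [StarOrderedRing A]
    (hA : ∀ I : TwoSidedIdeal A, IsClosed (I : Set A) → I = ⊥ ∨ I = ⊤)
    [Group G] [Fintype G] (α : G →* (A ≃ₐ[ℂ] A))
    (hyp : ∀ (F : Finset A) (ε : ℝ), 0 < ε → ∀ x : A, 0 ≤ x → x ≠ 0 →
      ∃ e : G → A,
        (∀ g, IsProjection (e g)) ∧ (∀ g, e g ≠ 0) ∧
        (∀ g h, g ≠ h → e g * e h = 0) ∧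
        (∀ g, ∀ a ∈ F, ‖e g * a - a * e g‖ < ε) ∧
        (∀ g h, ‖α g (e h) - e (g * h)‖ < ε) ∧
        CuntzSubeq ((1 : A) - ∑ g, e g) x) :
    HasTracialRokhlin α := by
  classical
  intro F ε hε x hx hx1
  obtain ⟨F₀, δ, hδ, hF₀⟩ := exists_forall_one_sub_lt_norm_conj hA hx hx1 hε
  set η := min ε δ / Fintype.card G
  have hcard : (0 : ℝ) < Fintype.card G := Nat.cast_pos.mpr Fintype.card_pos
  have hη : 0 < η := by positivity
  have hηε : η ≤ ε :=
    (div_le_self (lt_min hε hδ).le (Nat.one_le_cast.mpr Fintype.card_pos)).trans (min_le_left ε δ)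
  obtain ⟨e, hproj, hne, horth, hcomm, hequiv, hcuntz⟩ :=
    hyp (F ∪ F₀) η hη x hx (norm_ne_zero_iff.mp (by simp [hx1]))
  have he : ∀ g, IsStarProjection (e g) := fun g => ⟨(hproj g).2, (hproj g).1⟩
  have hE0 : ∑ g, e g ≠ 0 := fun h => hne 1 <| by
    rw [← sum_mul_eq_of_orthogonal (fun g => (he g).isIdempotentElem) horth 1, h, zero_mul]
  have hEcomm : ∀ b ∈ F₀, ‖(∑ g, e g) * b - b * ∑ g, e g‖ ≤ δ := fun b hb =>
    calc _ = ‖∑ g, (e g * b - b * e g)‖ := by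
          rw [Finset.sum_mul, Finset.mul_sum, Finset.sum_sub_distrib]
      _ ≤ ∑ g, η := (norm_sum_le _ _).trans <| Finset.sum_le_sum fun g _ =>
          (hcomm g b (Finset.mem_union_right F hb)).le
      _ = min ε δ := by
          rw [Finset.sum_const, Finset.card_univ, nsmul_eq_mul, mul_div_cancel₀ _ hcard.ne']
      _ ≤ δ := min_le_right ε δ
  exact ⟨e, hproj, horth, fun g a ha => (hcomm g a (Finset.mem_union_left F₀ ha)).trans_le hηε,
    fun g h => (hequiv g h).trans_le hηε, hcuntz,
    hF₀ _ (isStarProjection_sum he horth) hE0 hEcomm⟩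

theorem tracialRokhlin_of_nonzero_projections
    {A G : Type*} [CStarAlgebra A] [PartialOrder A] [StarOrderedRing A]
    (hA : ∀ I : TwoSidedIdeal A, IsClosed (I : Set A) → I = ⊥ ∨ I = ⊤)
    [Group G] [Fintype G] (α : G →* (A ≃ₐ[ℂ] A))
    (hα : ∀ (g : G) (a : A), α g (star a) = star (α g a))
    (hyp : ∀ (F : Finset A) (ε : ℝ), 0 < ε → ∀ x : A, 0 ≤ x → x ≠ 0 →
      ∃ e : G → A,
        (∀ g, IsProjection (e g)) ∧ (∀ g, e g ≠ 0) ∧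
        (∀ g h, g ≠ h → e g * e h = 0) ∧
        (∀ g, ∀ a ∈ F, ‖e g * a - a * e g‖ < ε) ∧
        (∀ g h, ‖α g (e h) - e (g * h)‖ < ε) ∧
        CuntzSubeq ((1 : A) - ∑ g, e g) x) :
    HasTracialRokhlin α :=
  tracialRokhlin_of_nonzero_projections_general hA α hyp
end

section
/- Let A be a simple infinite-dimensional unital C*-algebra which is not purely infinite, and let x ∈ A be a nonzero positive element. Then for every ε > 0 there exists a nonzero positive element y in the closure of xAx such that whenever f ∈ A satisfies 0 ≤ f ≤ 1 and 1 − f ≾ y, then ‖f‖ > 1 − ε. -/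
open Filter Topology

def PurelyInfinite (A : Type*) [CStarAlgebra A] : Prop :=
  ¬ FiniteDimensional ℂ A ∧ ∀ a : A, a ≠ 0 → ∃ u v : A, u * a * v = 1

theorem exists_y_in_hereditary_forcing_norm
    {A : Type*} [CStarAlgebra A] [PartialOrder A] [StarOrderedRing A]
    (hA : ∀ I : TwoSidedIdeal A, IsClosed (I : Set A) → I = ⊥ ∨ I = ⊤)
    (hdim : ¬ FiniteDimensional ℂ A) (hpi : ¬ PurelyInfinite A)
    (x : A) (hx : 0 ≤ x) (hx0 : x ≠ 0) :
    ∀ ε : ℝ, 0 < ε →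
      ∃ y : A, 0 ≤ y ∧ y ≠ 0 ∧ y ∈ closure {z : A | ∃ a : A, z = x * a * x} ∧
        ∀ f : A, 0 ≤ f → f ≤ 1 → CuntzSubeq ((1 : A) - f) y → 1 - ε < ‖f‖ := by
  intro ε hε
  -- Since A is infinite-dimensional but not purely infinite, some nonzero a₀ admits no
  -- factorization u * a₀ * v = 1.
  obtain ⟨a₀, ha₀ne, ha₀⟩ : ∃ a : A, a ≠ 0 ∧ ¬ ∃ u v : A, u * a * v = 1 := by
    by_contra h
    push_neg at h
    exact hpi ⟨hdim, fun a ha => h a ha⟩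
  -- Simplicity implies primeness: there is d with x * d * a₀ ≠ 0.
  obtain ⟨d, hd⟩ : ∃ d : A, x * d * a₀ ≠ 0 := by
    by_contra h
    push_neg at h
    set S : Set A := {c : A | ∀ d : A, x * d * c = 0} with hSdef
    have hzero : (0 : A) ∈ S := fun d => by simp
    have hadd : ∀ {p q : A}, p ∈ S → q ∈ S → p + q ∈ S := by
      intro p q hp hq e
      simp [mul_add, hp e, hq e]
    have hneg : ∀ {p : A}, p ∈ S → -p ∈ S := by
      intro p hp e
      simp [hp e]
    have hml : ∀ {r p : A}, p ∈ S → r * p ∈ S := by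
      intro r p hp e
      calc x * e * (r * p) = x * (e * r) * p := by simp [mul_assoc]
        _ = 0 := hp (e * r)
    have hmr : ∀ {p r : A}, p ∈ S → p * r ∈ S := by
      intro p r hp e
      calc x * e * (p * r) = (x * e * p) * r := by simp [mul_assoc]
        _ = 0 := by rw [hp e, zero_mul]
    set J : TwoSidedIdeal A := TwoSidedIdeal.mk' S hzero hadd hneg hml hmr with hJdef
    have hJmem : ∀ c : A, c ∈ J ↔ c ∈ S := fun c =>
      TwoSidedIdeal.mem_mk' S hzero hadd hneg hml hmr c
    have hJclosed : IsClosed (J : Set A) := by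
      rw [hJdef, TwoSidedIdeal.coe_mk']
      have : S = ⋂ e : A, (fun c => x * e * c) ⁻¹' {0} := by
        ext c; simp [hSdef, Set.mem_iInter]
      rw [this]
      exact isClosed_iInter fun e =>
        isClosed_singleton.preimage (continuous_mul_left (x * e))
    rcases hA J hJclosed with hbot | htop
    · have : a₀ ∈ J := (hJmem a₀).mpr h
      rw [hbot, TwoSidedIdeal.mem_bot] at this
      exact ha₀ne this
    · have : (1 : A) ∈ J := htop ▸ TwoSidedIdeal.mem_top A
      have hx1 := (hJmem 1).mp this 1
      simp at hx1
      exact hx0 hx1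
  -- The witness y = z * star z with z = x * d * a₀.
  set z : A := x * d * a₀ with hzdef
  set y : A := z * star z with hydef
  have hy0 : 0 ≤ y := mul_star_self_nonneg z
  have hyne : y ≠ 0 := by
    intro h
    apply hd
    have hn : ‖z‖ * ‖z‖ = 0 := by
      rw [← CStarRing.norm_self_mul_star, ← hydef, h, norm_zero]
    have : ‖z‖ = 0 := by nlinarith [norm_nonneg z]
    exact norm_eq_zero.mp this
  have hxsa : star x = x := hx.star_eq
  have hymem : y ∈ closure {w : A | ∃ a : A, w = x * a * x} := by
    apply subset_closure
    refine ⟨d * a₀ * star a₀ * star d, ?_⟩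
    simp [hydef, hzdef, star_mul, hxsa, mul_assoc]
  -- y admits no factorization u * y * v = 1.
  have hkey : ¬ ∃ u v : A, u * y * v = 1 := by
    rintro ⟨u, v, huv⟩
    apply ha₀
    refine ⟨u * (x * d), star z * v, ?_⟩
    calc u * (x * d) * a₀ * (star z * v) = u * y * v := by
          simp [hydef, hzdef, mul_assoc]
      _ = 1 := huv
  refine ⟨y, hy0, hyne, hymem, ?_⟩
  intro f hf0 hf1 hcz
  by_contra hle
  push_neg at hle
  have hflt : ‖f‖ < 1 := lt_of_le_of_lt hle (by linarith)
  set u1 : Aˣ := Units.oneSub f hflt with hu1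
  have hu1val : (u1 : A) = 1 - f := rfl
  obtain ⟨v, hv⟩ := hcz
  set C : ℝ := ‖((u1⁻¹ : Aˣ) : A)‖ with hC
  have hCnn : 0 ≤ C := norm_nonneg _
  have hδ : (0 : ℝ) < (C + 1)⁻¹ := by positivity
  obtain ⟨n, hn⟩ := (hv.eventually (gt_mem_nhds hδ)).exists
  set w : A := v n * y * star (v n) with hw
  have hsmall : ‖((u1⁻¹ : Aˣ) : A) * ((1 - f) - w)‖ < 1 := by
    calc ‖((u1⁻¹ : Aˣ) : A) * ((1 - f) - w)‖ ≤ C * ‖(1 - f) - w‖ := norm_mul_le _ _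
      _ ≤ C * (C + 1)⁻¹ := by
          apply mul_le_mul_of_nonneg_left (le_of_lt hn) hCnn
      _ < 1 := by
          rw [mul_inv_lt_iff₀ (by positivity), one_mul]
          linarith
  set u2 : Aˣ := Units.oneSub _ hsmall with hu2
  have hwu : w = (u1 : A) * (u2 : A) := by
    have h1 : (1 - f) * ((u1⁻¹ : Aˣ) : A) = 1 := by
      rw [← hu1val]; exact u1.mul_inv
    have h2 : (u1 : A) * (u2 : A)
        = (1 - f) - ((1 - f) * ((u1⁻¹ : Aˣ) : A)) * ((1 - f) - w) := by
      rw [hu1val, hu2, Units.val_oneSub, mul_sub, mul_one, mul_assoc]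
    rw [h1, one_mul, sub_sub_cancel] at h2
    exact h2.symm
  have hwunit : IsUnit w := hwu ▸ (u1 * u2).isUnit
  obtain ⟨uw, huw⟩ := hwunit
  apply hkey
  refine ⟨((uw⁻¹ : Aˣ) : A) * v n, star (v n), ?_⟩
  calc ((uw⁻¹ : Aˣ) : A) * v n * y * star (v n)
      = ((uw⁻¹ : Aˣ) : A) * w := by rw [hw]; simp [mul_assoc]
    _ = ((uw⁻¹ : Aˣ) : A) * (uw : A) := by rw [huw]
    _ = 1 := uw.inv_mul
end

section
/- Let A be a C*-algebra and let ω be a free ultrafilter on ℕ. Let (f_n)_{n∈ℕ} be a family of elements of ℓ∞(A) such that each f_n is a positive contraction (0 ≤ f_n(k) ≤ 1 for all k), f_n(k) f_m(k) = 0 for all k whenever n ≠ m, and lim_ω ‖f_n(k) − f_n(k)²‖ = 0 for each n. Then there exists a family (p_n)_{n∈ℕ} of elements of ℓ∞(A) such that each p_n(k) is a projection in A, p_n(k) p_m(k) = 0 for all k whenever n ≠ m, and lim_ω ‖p_n(k) − f_n(k)‖ = 0 for each n. -/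
open Filter Topology

/-!
If `a` is self-adjoint and `‖a - a²‖ ≤ ε ≤ 1/8`, every point `t` of the spectrum of `a` satisfies
`|t - t²| ≤ ε`, so the spectrum avoids `(1/4, 3/4)`. A continuous function which is `0` below
`1/4` and `1` above `3/4` is then idempotent on the spectrum, so applying it to `a` by the
functional calculus gives a projection at distance at most `4ε/3` from `a`. Orthogonality
`a * b = 0` of self-adjoint elements passes to all functions of `a` and `b` vanishing at `0`,
hence the resulting projections stay orthogonal.
-/

noncomputable def cutoff (t : ℝ) : ℝ := min 1 (max 0 (2 * t - 1 / 2))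

lemma continuous_cutoff : Continuous cutoff := by
  unfold cutoff; fun_prop

lemma cutoff_zero : cutoff 0 = 0 := by norm_num [cutoff]

lemma cutoff_of_le {t : ℝ} (ht : t ≤ 1 / 4) : cutoff t = 0 := by
  rw [cutoff, max_eq_left (by linarith), min_eq_right zero_le_one]

lemma cutoff_of_ge {t : ℝ} (ht : 3 / 4 ≤ t) : cutoff t = 1 := by
  rw [cutoff, max_eq_right (by linarith), min_eq_left (by linarith)]

lemma cutoff_mul_self {t : ℝ} (ht : t ≤ 1 / 4 ∨ 3 / 4 ≤ t) : cutoff t * cutoff t = cutoff t := by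
  rcases ht with ht | ht
  · simp [cutoff_of_le ht]
  · simp [cutoff_of_ge ht]

lemma abs_cutoff_sub_le {t : ℝ} (ht : t ≤ 1 / 4 ∨ 3 / 4 ≤ t) :
    |cutoff t - t| ≤ 4 / 3 * |t - t * t| := by
  rw [show t - t * t = t * (1 - t) by ring, abs_mul]
  rcases ht with ht | ht
  · rw [cutoff_of_le ht, zero_sub, abs_neg, abs_of_pos (by linarith : 0 < 1 - t)]
    nlinarith [abs_nonneg t]
  · rw [cutoff_of_ge ht, abs_of_pos (by linarith : 0 < t), abs_sub_comm]
    nlinarith [abs_nonneg (t - 1)]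

lemma le_quarter_or_ge_of_abs_sub_mul_self_le {t : ℝ} (h : |t - t * t| ≤ 1 / 8) :
    t ≤ 1 / 4 ∨ 3 / 4 ≤ t := by
  by_contra! hmid
  nlinarith [(abs_le.mp h).2]

section CStarAlgebra

variable {A : Type*} [NonUnitalCStarAlgebra A] {a b : A}

lemma abs_sub_mul_self_le_norm (ha : IsSelfAdjoint a) {t : ℝ} (ht : t ∈ quasispectrum ℝ a) :
    |t - t * t| ≤ ‖a - a * a‖ := by
  have hcfc : cfcₙ (fun t : ℝ => t - t * t) a = a - a * a := by
    rw [cfcₙ_sub (fun t : ℝ => t) (fun t : ℝ => t * t) a, cfcₙ_mul (fun t : ℝ => t) _ a,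
      cfcₙ_id' ℝ a]
  simpa [hcfc] using norm_apply_le_norm_cfcₙ (fun t : ℝ => t - t * t) a ht

lemma cfcₙ_mul_cfcₙ_eq_zero (ha : IsSelfAdjoint a) (hb : IsSelfAdjoint b) (hab : a * b = 0)
    {g h : ℝ → ℝ} (hg : Continuous g) (hg0 : g 0 = 0) (hh : Continuous h) (hh0 : h 0 = 0) :
    cfcₙ g a * cfcₙ h b = 0 := by
  rw [cfcₙ_apply g a hg.continuousOn hg0 ha, cfcₙ_apply h b hh.continuousOn hh0 hb]
  refine ContinuousMapZero.nonUnitalStarAlgHom_apply_mul_eq_zero _ _ ?_ ?_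
    (cfcₙHom_continuous ha) _
  all_goals
    refine ContinuousMapZero.mul_nonUnitalStarAlgHom_apply_eq_zero _ _ ?_ ?_
      (cfcₙHom_continuous hb) _
    all_goals simpa only [star_trivial, cfcₙHom_id ha, cfcₙHom_id hb] using hab

/-- Below the threshold `1/8` the spectrum of `a` avoids `(1/4, 3/4)`, where `cutoff` is not
idempotent; above it we return `0`. -/
noncomputable def roundToProjection (a : A) : A :=
  if ‖a - a * a‖ ≤ 1 / 8 then cfcₙ cutoff a else 0

lemma quasispectrum_gap (ha : IsSelfAdjoint a) (hsmall : ‖a - a * a‖ ≤ 1 / 8)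
    {t : ℝ} (ht : t ∈ quasispectrum ℝ a) : t ≤ 1 / 4 ∨ 3 / 4 ≤ t :=
  le_quarter_or_ge_of_abs_sub_mul_self_le ((abs_sub_mul_self_le_norm ha ht).trans hsmall)

lemma isProjection_roundToProjection (ha : IsSelfAdjoint a) :
    IsProjection (roundToProjection a) := by
  unfold roundToProjection
  split_ifs with hsmall
  · refine ⟨(cfcₙ_predicate cutoff a).star_eq, ?_⟩
    rw [← cfcₙ_mul cutoff cutoff a continuous_cutoff.continuousOn cutoff_zero
      continuous_cutoff.continuousOn cutoff_zero]
    exact cfcₙ_congr fun t ht => cutoff_mul_self (quasispectrum_gap ha hsmall ht)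
  · exact ⟨star_zero A, mul_zero 0⟩

lemma roundToProjection_mul_eq_zero (ha : IsSelfAdjoint a) (hb : IsSelfAdjoint b)
    (hab : a * b = 0) : roundToProjection a * roundToProjection b = 0 := by
  unfold roundToProjection
  split_ifs
  · exact cfcₙ_mul_cfcₙ_eq_zero ha hb hab continuous_cutoff cutoff_zero
      continuous_cutoff cutoff_zero
  all_goals simp

lemma norm_roundToProjection_sub_le (ha : IsSelfAdjoint a) (hsmall : ‖a - a * a‖ ≤ 1 / 8) :
    ‖roundToProjection a - a‖ ≤ 4 / 3 * ‖a - a * a‖ := by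
  have hcfc : cfcₙ (fun t => cutoff t - t) a = cfcₙ cutoff a - a := by
    rw [cfcₙ_sub cutoff (fun t : ℝ => t) a continuous_cutoff.continuousOn cutoff_zero,
      cfcₙ_id' ℝ a]
  rw [roundToProjection, if_pos hsmall, ← hcfc]
  refine norm_cfcₙ_le fun t ht => ?_
  calc ‖cutoff t - t‖ ≤ 4 / 3 * |t - t * t| := abs_cutoff_sub_le (quasispectrum_gap ha hsmall ht)
    _ ≤ 4 / 3 * ‖a - a * a‖ := by gcongr; exact abs_sub_mul_self_le_norm ha ht

lemma tendsto_norm_roundToProjection_sub {ι : Type*} {l : Filter ι} {u : ι → A}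
    (hu : ∀ i, IsSelfAdjoint (u i)) (hidem : Tendsto (fun i => ‖u i - u i * u i‖) l (𝓝 0)) :
    Tendsto (fun i => ‖roundToProjection (u i) - u i‖) l (𝓝 0) := by
  have hsmall : ∀ᶠ i in l, ‖u i - u i * u i‖ ≤ 1 / 8 :=
    hidem.eventually (eventually_le_nhds (by norm_num))
  refine squeeze_zero' (.of_forall fun i => norm_nonneg _)
    (hsmall.mono fun i hi => norm_roundToProjection_sub_le (hu i) hi) ?_
  simpa using hidem.const_mul (4 / 3)

end CStarAlgebra

theorem exists_orthogonal_projection_lift_general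
    {A : Type*} [CStarAlgebra A] [PartialOrder A] [StarOrderedRing A]
    (ω : Ultrafilter ℕ)
    (f : ℕ → ℕ → A)
    (hpos : ∀ n k, 0 ≤ f n k)
    (horth : ∀ n m, n ≠ m → ∀ k, f n k * f m k = 0)
    (hidem : ∀ n, Filter.Tendsto (fun k => ‖f n k - f n k * f n k‖) (ω : Filter ℕ)
      (nhds (0 : ℝ))) :
    ∃ p : ℕ → ℕ → A,
      (∀ n k, IsProjection (p n k)) ∧
      (∀ n m, n ≠ m → ∀ k, p n k * p m k = 0) ∧
      (∀ n, Filter.Tendsto (fun k => ‖p n k - f n k‖) (ω : Filter ℕ) (nhds (0 : ℝ))) := by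
  have hsa : ∀ n k, IsSelfAdjoint (f n k) := fun n k => .of_nonneg (hpos n k)
  exact ⟨fun n k => roundToProjection (f n k),
    fun n k => isProjection_roundToProjection (hsa n k),
    fun n m hnm k => roundToProjection_mul_eq_zero (hsa n k) (hsa m k) (horth n m hnm k),
    fun n => tendsto_norm_roundToProjection_sub (hsa n) (hidem n)⟩

/-- Along a free ultrafilter, a family of pairwise orthogonal positive contractions in
`ℓ∞(A)` which are approximately idempotent can be lifted to a family of pairwise
orthogonal projections in `ℓ∞(A)` at distance zero along the ultrafilter. -/
theorem exists_orthogonal_projection_lift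
    {A : Type*} [CStarAlgebra A] [PartialOrder A] [StarOrderedRing A]
    (ω : Ultrafilter ℕ) (hω : Filter.cofinite ≤ (ω : Filter ℕ))
    (f : ℕ → ℕ → A)
    (hpos : ∀ n k, 0 ≤ f n k) (hcontr : ∀ n k, f n k ≤ 1)
    (horth : ∀ n m, n ≠ m → ∀ k, f n k * f m k = 0)
    (hidem : ∀ n, Filter.Tendsto (fun k => ‖f n k - f n k * f n k‖) (ω : Filter ℕ)
      (nhds (0 : ℝ))) :
    ∃ p : ℕ → ℕ → A,
      (∀ n k, IsProjection (p n k)) ∧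
      (∀ n m, n ≠ m → ∀ k, p n k * p m k = 0) ∧
      (∀ n, Filter.Tendsto (fun k => ‖p n k - f n k‖) (ω : Filter ℕ) (nhds (0 : ℝ))) :=
  exists_orthogonal_projection_lift_general ω f hpos horth hidem
end
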